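/- arXiv:2407.15418 — 2 statements merged into one kernel-verified Lean document; each statement's English description precedes it below -/
import Mathlib

section
/- Let n ≥ 1 and κ ≥ 1 be integers, let b_0, b_1, …, b_κ ∈ ℂ^n be vectors, let g_0, g_1, …, g_κ be real numbers with |g_t| ≤ 1 for every t, and let ε ∈ {+1, −1}. Then the n × n complex matrix M := κ · Σ_{j=0}^κ b_j b_j^H + ε · Σ_{0 ≤ j, s ≤ κ, j ≠ s} ( ∏_{t ∉ {j, s}} g_t ) · b_j b_s^H is Hermitian positive semidefinite; equivalently, for every v ∈ ℂ^n one has κ · Σ_{j=0}^κ |⟨b_j, v⟩|² + ε · Σ_{j ≠ s} ( ∏_{t ∉ {j, s}} g_t ) · ⟨b_j, v⟩ · conj(⟨b_s, v⟩) ≥ 0. -/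
/-!
Let `X` be the matrix whose rows are the `b_jᴴ`. Then `M = Xᴴ C X`, where the coupling matrix `C`
has diagonal entries `κ` and off-diagonal entries `ε ∏_{t ∉ {j,s}} g_t`. These off-diagonal entries
have modulus at most `1` and each row has `κ` of them, so the Hermitian matrix `C` is weakly
diagonally dominant, and Gershgorin's circle theorem puts its eigenvalues in `[0, ∞)`. The Hermitian
form of the second claim is the quadratic form of `C` at the vector `(conj ⟨b_j, v⟩)_j`.
-/

open Finset Matrix
open scoped ComplexOrder ComplexConjugate

noncomputable section

theorem Matrix.IsHermitian.posSemidef_of_sum_norm_le_re_diag {𝕜 n : Type*} [RCLike 𝕜]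
    [Fintype n] [DecidableEq n] {A : Matrix n n 𝕜} (hA : A.IsHermitian)
    (hdom : ∀ k, ∑ j ∈ univ.erase k, ‖A k j‖ ≤ RCLike.re (A k k)) : A.PosSemidef := by
  rw [hA.posSemidef_iff_eigenvalues_nonneg]
  intro i
  have hμ : Module.End.HasEigenvalue (toLin' A) (hA.eigenvalues i : 𝕜) := by
    rw [Module.End.hasEigenvalue_iff_mem_spectrum, spectrum_toLin']
    exact spectrum.algebraMap_mem 𝕜 (hA.eigenvalues_mem_spectrum_real i)
  obtain ⟨k, hk⟩ := eigenvalue_mem_ball hμ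
  rw [Metric.mem_closedBall, dist_comm, dist_eq_norm] at hk
  have hre : RCLike.re (A k k) - hA.eigenvalues i ≤ ‖A k k - hA.eigenvalues i‖ := by
    simpa using RCLike.re_le_norm (A k k - hA.eigenvalues i)
  show 0 ≤ hA.eigenvalues i
  linarith [hdom k]

lemma sum_ite_eq_mul_add_sum_erase {ι R : Type*} [Fintype ι] [DecidableEq ι]
    [NonUnitalNonAssocSemiring R] (d : R) (f w : ι → R) (j : ι) :
    ∑ s, (if j = s then d else f s) * w s = d * w j + ∑ s ∈ univ.erase j, f s * w s := by
  rw [← add_sum_erase _ _ (mem_univ j), if_pos rfl]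
  congr 1
  exact sum_congr rfl fun s hs => by rw [if_neg (ne_of_mem_erase hs).symm]

def pairCouplingMatrix (κ : ℕ) (g : Fin (κ + 1) → ℝ) (ε : ℂ) :
    Matrix (Fin (κ + 1)) (Fin (κ + 1)) ℂ :=
  of fun j s => if j = s then (κ : ℂ) else ε * ∏ t ∈ (univ.erase j).erase s, ((g t : ℝ) : ℂ)

lemma pairCouplingMatrix_isHermitian (κ : ℕ) (g : Fin (κ + 1) → ℝ) {ε : ℂ} (hε : conj ε = ε) :
    (pairCouplingMatrix κ g ε).IsHermitian := by
  ext j s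
  by_cases h : j = s
  · subst h
    simp [pairCouplingMatrix]
  · simp [pairCouplingMatrix, h, Ne.symm h, hε, erase_right_comm]

lemma sum_norm_pairCouplingMatrix_le (κ : ℕ) {g : Fin (κ + 1) → ℝ} (hg : ∀ t, |g t| ≤ 1)
    {ε : ℂ} (hε : ‖ε‖ ≤ 1) (k : Fin (κ + 1)) :
    ∑ j ∈ univ.erase k, ‖pairCouplingMatrix κ g ε k j‖ ≤ (pairCouplingMatrix κ g ε k k).re := by
  have hentry : ∀ j ∈ univ.erase k, ‖pairCouplingMatrix κ g ε k j‖ ≤ 1 := by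
    intro j hj
    rw [pairCouplingMatrix, of_apply, if_neg (ne_of_mem_erase hj).symm, norm_mul, norm_prod]
    exact mul_le_one₀ hε (prod_nonneg fun _ _ => norm_nonneg _)
      (prod_le_one (fun _ _ => norm_nonneg _) fun t _ => by simpa using hg t)
  calc ∑ j ∈ univ.erase k, ‖pairCouplingMatrix κ g ε k j‖ ≤ ∑ j ∈ univ.erase k, (1 : ℝ) :=
        sum_le_sum hentry
    _ = κ := by simp [card_erase_of_mem]
    _ = (pairCouplingMatrix κ g ε k k).re := by simp [pairCouplingMatrix]

lemma pairCouplingMatrix_posSemidef (κ : ℕ) {g : Fin (κ + 1) → ℝ} (hg : ∀ t, |g t| ≤ 1)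
    {ε : ℂ} (hε_real : conj ε = ε) (hε_norm : ‖ε‖ ≤ 1) :
    (pairCouplingMatrix κ g ε).PosSemidef :=
  (pairCouplingMatrix_isHermitian κ g hε_real).posSemidef_of_sum_norm_le_re_diag
    (sum_norm_pairCouplingMatrix_le κ hg hε_norm)

lemma dotProduct_pairCouplingMatrix_mulVec (κ : ℕ) (g : Fin (κ + 1) → ℝ) (ε : ℂ)
    (u w : Fin (κ + 1) → ℂ) :
    u ⬝ᵥ (pairCouplingMatrix κ g ε *ᵥ w) =
      (κ : ℂ) * ∑ j, u j * w j +
        ε * ∑ j, ∑ s ∈ univ.erase j,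
          (∏ t ∈ (univ.erase j).erase s, ((g t : ℝ) : ℂ)) * (u j * w s) := by
  simp only [dotProduct, mulVec, pairCouplingMatrix, of_apply, sum_ite_eq_mul_add_sum_erase,
    mul_add, sum_add_distrib, mul_sum]
  congr 1 <;> refine sum_congr rfl fun j _ => ?_
  · ring
  · exact sum_congr rfl fun s _ => by ring

lemma hessian_matrix_eq_conjTranspose_mul_mul (n κ : ℕ) (b : Fin (κ + 1) → Fin n → ℂ)
    (g : Fin (κ + 1) → ℝ) (ε : ℂ) :
    (of fun a a' : Fin n =>
        (κ : ℂ) * ∑ j, b j a * conj (b j a') +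
          ε * ∑ j, ∑ s ∈ univ.erase j,
            (∏ t ∈ (univ.erase j).erase s, ((g t : ℝ) : ℂ)) * (b j a * conj (b s a'))) =
      (of fun j a => conj (b j a))ᴴ * pairCouplingMatrix κ g ε * of fun j a => conj (b j a) := by
  ext a a'
  rw [Matrix.mul_assoc, of_apply, ← dotProduct_pairCouplingMatrix_mulVec]
  simp [mul_apply, dotProduct, mulVec]

theorem hessian_matrix_posSemidef_general
    (n κ : ℕ)
    (b : Fin (κ + 1) → Fin n → ℂ)
    (g : Fin (κ + 1) → ℝ) (hg : ∀ t, |g t| ≤ 1)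
    (ε : ℂ) (hε : ε = 1 ∨ ε = -1) :
    -- the matrix `M`
    (Matrix.of fun a a' : Fin n =>
        (κ : ℂ) * ∑ j, b j a * conj (b j a') +
          ε * ∑ j, ∑ s ∈ univ.erase j,
            (∏ t ∈ (univ.erase j).erase s, ((g t : ℝ) : ℂ)) *
              (b j a * conj (b s a'))).PosSemidef ∧
    -- equivalently, the associated Hermitian form is nonnegative
    ∀ v : Fin n → ℂ,
      0 ≤ (κ : ℂ) * ∑ j, (∑ a, conj (b j a) * v a) * conj (∑ a, conj (b j a) * v a) +
          ε * ∑ j, ∑ s ∈ univ.erase j,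
            (∏ t ∈ (univ.erase j).erase s, ((g t : ℝ) : ℂ)) *
              ((∑ a, conj (b j a) * v a) * conj (∑ a, conj (b s a) * v a)) := by
  obtain ⟨hε_real, hε_norm⟩ : conj ε = ε ∧ ‖ε‖ ≤ 1 := by rcases hε with rfl | rfl <;> simp
  have hC := pairCouplingMatrix_posSemidef κ hg hε_real hε_norm
  refine ⟨hessian_matrix_eq_conjTranspose_mul_mul n κ b g ε ▸ hC.conjTranspose_mul_mul_same _,
    fun v => ?_⟩
  simpa only [dotProduct_pairCouplingMatrix_mulVec, Pi.star_apply, Complex.star_def,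
    Complex.conj_conj] using hC.dotProduct_mulVec_nonneg fun j => conj (∑ a, conj (b j a) * v a)

/-- Lemma: the Hermitian matrix
`M = κ Σ_j b_j b_j^H + ε Σ_{j ≠ s} (∏_{t ∉ {j,s}} g_t) b_j b_s^H`
is positive semidefinite whenever `|g_t| ≤ 1` for all `t` and `ε = ±1`; equivalently, for
every vector `v`,
`κ Σ_j |⟨b_j, v⟩|² + ε Σ_{j ≠ s} (∏_{t ∉ {j,s}} g_t) ⟨b_j, v⟩ conj(⟨b_s, v⟩) ≥ 0`. -/
theorem hessian_matrix_posSemidef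
    (n κ : ℕ) (hn : 1 ≤ n) (hκ : 1 ≤ κ)
    (b : Fin (κ + 1) → Fin n → ℂ)
    (g : Fin (κ + 1) → ℝ) (hg : ∀ t, |g t| ≤ 1)
    (ε : ℂ) (hε : ε = 1 ∨ ε = -1) :
    -- the matrix `M`
    (Matrix.of fun a a' : Fin n =>
        (κ : ℂ) * ∑ j, b j a * conj (b j a') +
          ε * ∑ j, ∑ s ∈ univ.erase j,
            (∏ t ∈ (univ.erase j).erase s, ((g t : ℝ) : ℂ)) *
              (b j a * conj (b s a'))).PosSemidef ∧
    -- equivalently, the associated Hermitian form is nonnegative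
    ∀ v : Fin n → ℂ,
      0 ≤ (κ : ℂ) * ∑ j, (∑ a, conj (b j a) * v a) * conj (∑ a, conj (b j a) * v a) +
          ε * ∑ j, ∑ s ∈ univ.erase j,
            (∏ t ∈ (univ.erase j).erase s, ((g t : ℝ) : ℂ)) *
              ((∑ a, conj (b j a) * v a) * conj (∑ a, conj (b s a) * v a)) :=
  hessian_matrix_posSemidef_general n κ b g hg ε hε

end
end

section
/- Let n ≥ 1 and κ ≥ 1 be integers, U ⊆ ℂ^n an open set, and G_0, G_1, …, G_κ : U → ℝ functions of class C² such that |G_j(x)| ≤ 1 for all x ∈ U and all j, and such that each G_j is Levi-positive on U, i.e. D²G_j(x)(v, v) + D²G_j(x)(iv, iv) ≥ 0 for every x ∈ U and v ∈ ℂ^n. For ε ∈ {+1, −1}, define Φ^ε := Σ_{j=0}^κ ( (κ+1) G_j + (κ/2) G_j² ) + ε ∏_{j=0}^κ G_j. Then for every x ∈ U and v ∈ ℂ^n, D²Φ^ε(x)(v, v) + D²Φ^ε(x)(iv, iv) ≥ Σ_{j=0}^κ ( κ + 1 + κ G_j(x) + ε ∏_{s ≠ j} G_s(x) ) · ( D²G_j(x)(v,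 v) + D²G_j(x)(iv, iv) ) ≥ 0. In particular, Φ^+ and Φ^− are Levi-positive (hence plurisubharmonic) on U. -/
open Finset

noncomputable section

/-- The second (real) Fréchet derivative of `u : ℂⁿ → ℝ` at `x`, evaluated at `(v, w)`. -/
def D2 {n : ℕ} (u : (Fin n → ℂ) → ℝ) (x v w : Fin n → ℂ) : ℝ :=
  fderiv ℝ (fderiv ℝ u) x v w

/-- The Levi-type quantity `D²u(x)(v,v) + D²u(x)(iv,iv)`; a `C²` function is p.s.h. on an open
set iff this is nonnegative there for all `v`. -/
def Levi {n : ℕ} (u : (Fin n → ℂ) → ℝ) (x v : Fin n → ℂ) : ℝ :=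
  D2 u x v v + D2 u x (Complex.I • v) (Complex.I • v)


/-!
The Levi form `L u = D²u(v,v) + D²u(iv,iv)` obeys a Leibniz rule
`L(fg) = f L g + g L f + 2⟪∂f, ∂g⟫`, with `∂f = Df(v) + i Df(iv) ∈ ℂ`. Expanding `Φ^ε` this way
gives `L Φ^ε = Σ_j c_j L G_j + κ Σ_j |∂G_j|² + ε Σ_{j ≠ k} (∏_{s ≠ j,k} G_s) ⟪∂G_j, ∂G_k⟫`,
where `c_j` are the stated coefficients. As `|G_s| ≤ 1`, each cross term is bounded by
`|∂G_j||∂G_k| ≤ (|∂G_j|² + |∂G_k|²)/2`, so the squares `(κ/2) G_j²` pay exactly for the cross sum;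
and `c_j ≥ κ + 1 - κ - 1 = 0`.
-/

section
variable {E F : Type*} [NormedAddCommGroup E] [NormedSpace ℝ E] [NormedAddCommGroup F]
  [NormedSpace ℝ F] {f : E → F} {x : E}

theorem ContDiffAt.eventually_differentiableAt (hf : ContDiffAt ℝ 2 f x) :
    ∀ᶠ y in nhds x, DifferentiableAt ℝ f y :=
  (hf.eventually (by simp)).mono fun _ hy => hy.differentiableAt two_ne_zero

theorem ContDiffAt.differentiableAt_fderiv (hf : ContDiffAt ℝ 2 f x) :
    DifferentiableAt ℝ (fderiv ℝ f) x :=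
  (hf.fderiv_right (m := 1) le_rfl).differentiableAt one_ne_zero

end

section
variable {n : ℕ} {x : Fin n → ℂ} {f g : (Fin n → ℂ) → ℝ}

theorem D2_add (hf : ContDiffAt ℝ 2 f x) (hg : ContDiffAt ℝ 2 g x) (v w : Fin n → ℂ) :
    D2 (fun y => f y + g y) x v w = D2 f x v w + D2 g x v w := by
  have h : fderiv ℝ (fun y => f y + g y) =ᶠ[nhds x] fun y => fderiv ℝ f y + fderiv ℝ g y :=
    (hf.eventually_differentiableAt.and hg.eventually_differentiableAt).mono
      fun y hy => fderiv_add hy.1 hy.2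
  simp [D2, h.fderiv_eq,
    fderiv_fun_add hf.differentiableAt_fderiv hg.differentiableAt_fderiv]

theorem D2_const_mul (c : ℝ) (hf : ContDiffAt ℝ 2 f x) (v w : Fin n → ℂ) :
    D2 (fun y => c * f y) x v w = c * D2 f x v w := by
  have h : fderiv ℝ (fun y => c * f y) =ᶠ[nhds x] fun y => c • fderiv ℝ f y :=
    hf.eventually_differentiableAt.mono fun y hy => fderiv_const_mul hy c
  simp [D2, h.fderiv_eq, fderiv_fun_const_smul hf.differentiableAt_fderiv]

theorem D2_sum {ι : Type*} (s : Finset ι) {f : ι → (Fin n → ℂ) → ℝ}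
    (hf : ∀ i ∈ s, ContDiffAt ℝ 2 (f i) x) (v w : Fin n → ℂ) :
    D2 (fun y => ∑ i ∈ s, f i y) x v w = ∑ i ∈ s, D2 (f i) x v w := by
  have h : fderiv ℝ (fun y => ∑ i ∈ s, f i y) =ᶠ[nhds x]
      fun y => ∑ i ∈ s, fderiv ℝ (f i) y := by
    filter_upwards [(Filter.eventually_all_finset s).2 fun i hi =>
      (hf i hi).eventually_differentiableAt] with y hy
    exact fderiv_fun_sum hy
  simp [D2, h.fderiv_eq, fderiv_fun_sum fun i hi => (hf i hi).differentiableAt_fderiv]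

theorem D2_mul (hf : ContDiffAt ℝ 2 f x) (hg : ContDiffAt ℝ 2 g x) (v w : Fin n → ℂ) :
    D2 (fun y => f y * g y) x v w = f x * D2 g x v w + g x * D2 f x v w
      + fderiv ℝ f x v * fderiv ℝ g x w + fderiv ℝ f x w * fderiv ℝ g x v := by
  have h : fderiv ℝ (fun y => f y * g y) =ᶠ[nhds x]
      fun y => f y • fderiv ℝ g y + g y • fderiv ℝ f y :=
    (hf.eventually_differentiableAt.and hg.eventually_differentiableAt).mono
      fun y hy => fderiv_mul hy.1 hy.2
  have hf' := hf.differentiableAt two_ne_zero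
  have hg' := hg.differentiableAt two_ne_zero
  rw [D2, h.fderiv_eq,
    fderiv_fun_add (hf'.fun_smul hg.differentiableAt_fderiv)
      (hg'.fun_smul hf.differentiableAt_fderiv),
    fderiv_fun_smul hf' hg.differentiableAt_fderiv, fderiv_fun_smul hg' hf.differentiableAt_fderiv]
  simp only [add_apply, smul_apply, ContinuousLinearMap.smulRight_apply, smul_eq_mul, D2]
  ring

theorem D2_prod {ι : Type*} [DecidableEq ι] (s : Finset ι) {f : ι → (Fin n → ℂ) → ℝ}
    (hf : ∀ i ∈ s, ContDiffAt ℝ 2 (f i) x) (v w : Fin n → ℂ) :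
    D2 (fun y => ∏ i ∈ s, f i y) x v w =
      ∑ i ∈ s, ((∏ j ∈ s.erase i, f j x) * D2 (f i) x v w
        + ∑ k ∈ s.erase i, (∏ j ∈ (s.erase i).erase k, f j x)
            * fderiv ℝ (f k) x v * fderiv ℝ (f i) x w) := by
  have h : fderiv ℝ (fun y => ∏ i ∈ s, f i y) =ᶠ[nhds x]
      fun y => ∑ i ∈ s, (∏ j ∈ s.erase i, f j y) • fderiv ℝ (f i) y := by
    filter_upwards [(Filter.eventually_all_finset s).2 fun i hi =>
      (hf i hi).eventually_differentiableAt] with y hy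
    exact fderiv_finsetProd hy
  have hf' : ∀ i ∈ s, DifferentiableAt ℝ (f i) x :=
    fun i hi => (hf i hi).differentiableAt two_ne_zero
  have hprod : ∀ i, DifferentiableAt ℝ (fun y => ∏ j ∈ s.erase i, f j y) x := fun i =>
    (HasFDerivAt.finsetProd fun j hj =>
      (hf' j (mem_of_mem_erase hj)).hasFDerivAt).differentiableAt
  rw [D2, h.fderiv_eq,
    fderiv_fun_sum fun i hi => (hprod i).fun_smul (hf i hi).differentiableAt_fderiv]
  simp only [FunLike.coe_sum, Finset.sum_apply]
  refine sum_congr rfl fun i hi => ?_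
  rw [fderiv_fun_smul (hprod i) (hf i hi).differentiableAt_fderiv,
    fderiv_finsetProd fun j hj => hf' j (mem_of_mem_erase hj)]
  simp [D2, sum_mul]

/-- Packing `Df(x)v` and `Df(x)(iv)` into one complex number turns the cross terms of the Levi
form of a product into real inner products in `ℂ`. -/
def fderivPair (f : (Fin n → ℂ) → ℝ) (x v : Fin n → ℂ) : ℂ :=
  ⟨fderiv ℝ f x v, fderiv ℝ f x (Complex.I • v)⟩

theorem inner_fderivPair (v : Fin n → ℂ) :
    inner ℝ (fderivPair f x v) (fderivPair g x v) =
      fderiv ℝ f x v * fderiv ℝ g x v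
        + fderiv ℝ f x (Complex.I • v) * fderiv ℝ g x (Complex.I • v) := by
  simp only [fderivPair, Complex.inner, Complex.mul_re, Complex.conj_re, Complex.conj_im, mul_neg,
    sub_neg_eq_add]
  ring

theorem Levi_add (hf : ContDiffAt ℝ 2 f x) (hg : ContDiffAt ℝ 2 g x) (v : Fin n → ℂ) :
    Levi (fun y => f y + g y) x v = Levi f x v + Levi g x v := by
  simp only [Levi, D2_add hf hg]
  ring

theorem Levi_const_mul (c : ℝ) (hf : ContDiffAt ℝ 2 f x) (v : Fin n → ℂ) :
    Levi (fun y => c * f y) x v = c * Levi f x v := by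
  simp only [Levi, D2_const_mul c hf]
  ring

theorem Levi_sum {ι : Type*} (s : Finset ι) {f : ι → (Fin n → ℂ) → ℝ}
    (hf : ∀ i ∈ s, ContDiffAt ℝ 2 (f i) x) (v : Fin n → ℂ) :
    Levi (fun y => ∑ i ∈ s, f i y) x v = ∑ i ∈ s, Levi (f i) x v := by
  simp only [Levi, D2_sum s hf, sum_add_distrib]

theorem Levi_sq (hf : ContDiffAt ℝ 2 f x) (v : Fin n → ℂ) :
    Levi (fun y => f y ^ 2) x v = 2 * f x * Levi f x v + 2 * ‖fderivPair f x v‖ ^ 2 := by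
  rw [← real_inner_self_eq_norm_sq, inner_fderivPair]
  simp only [sq, Levi, D2_mul hf hf]
  ring

theorem Levi_prod {ι : Type*} [DecidableEq ι] (s : Finset ι) {f : ι → (Fin n → ℂ) → ℝ}
    (hf : ∀ i ∈ s, ContDiffAt ℝ 2 (f i) x) (v : Fin n → ℂ) :
    Levi (fun y => ∏ i ∈ s, f i y) x v =
      ∑ i ∈ s, (∏ j ∈ s.erase i, f j x) * Levi (f i) x v
        + ∑ i ∈ s, ∑ k ∈ s.erase i, (∏ j ∈ (s.erase i).erase k, f j x)
            * inner ℝ (fderivPair (f i) x v) (fderivPair (f k) x v) := by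
  simp only [Levi, D2_prod s hf, inner_fderivPair, ← sum_add_distrib]
  refine sum_congr rfl fun i _ => ?_
  rw [add_add_add_comm, ← mul_add, ← sum_add_distrib]
  exact congrArg _ (sum_congr rfl fun k _ => by ring)
end

theorem abs_prod_le_one {ι R : Type*} [CommRing R] [LinearOrder R] [IsStrictOrderedRing R]
    {f : ι → R} (s : Finset ι) (hf : ∀ i ∈ s, |f i| ≤ 1) : |∏ i ∈ s, f i| ≤ 1 := by
  rw [abs_prod]
  exact prod_le_one (fun i _ => abs_nonneg _) hf

section
variable {ι : Type*} [Fintype ι] [DecidableEq ι]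

theorem sum_sum_erase_add_div_two (a : ι → ℝ) :
    ∑ j, ∑ k ∈ univ.erase j, (a j + a k) / 2 = (Fintype.card ι - 1) * ∑ j, a j := by
  have h : ∀ j, ∑ k ∈ univ.erase j, (a j + a k) / 2
      = ((Fintype.card ι - 2) * a j + ∑ k, a k) / 2 := by
    intro j
    rw [← sum_div, sum_erase_eq_sub (mem_univ j), sum_add_distrib, sum_const, card_univ,
      nsmul_eq_mul]
    ring
  rw [sum_congr rfl fun j _ => h j, ← sum_div, sum_add_distrib, ← mul_sum, sum_const,
    card_univ, nsmul_eq_mul]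
  ring

theorem abs_sum_sum_erase_mul_inner_le {E : Type*} [NormedAddCommGroup E]
    [InnerProductSpace ℝ E] (a : ι → E) (c : ι → ι → ℝ) (hc : ∀ j k, |c j k| ≤ 1) :
    |∑ j, ∑ k ∈ univ.erase j, c j k * inner ℝ (a j) (a k)|
      ≤ (Fintype.card ι - 1) * ∑ j, ‖a j‖ ^ 2 := by
  rw [← sum_sum_erase_add_div_two]
  refine (abs_sum_le_sum_abs _ _).trans <| sum_le_sum fun j _ =>
    (abs_sum_le_sum_abs _ _).trans <| sum_le_sum fun k _ => ?_
  calc |c j k * inner ℝ (a j) (a k)| ≤ 1 * (‖a j‖ * ‖a k‖) := by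
        rw [abs_mul]
        exact mul_le_mul (hc j k) (abs_real_inner_le_norm _ _) (abs_nonneg _) zero_le_one
    _ ≤ (‖a j‖ ^ 2 + ‖a k‖ ^ 2) / 2 := by nlinarith [sq_nonneg (‖a j‖ - ‖a k‖)]

variable {n : ℕ} {x : Fin n → ℂ}

theorem Levi_sum_add_mul_prod {G : ι → (Fin n → ℂ) → ℝ} (hG : ∀ j, ContDiffAt ℝ 2 (G j) x)
    (a b ε : ℝ) (v : Fin n → ℂ) :
    Levi (fun y => ∑ j, (a * G j y + b * G j y ^ 2) + ε * ∏ j, G j y) x v =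
      ∑ j, (a + 2 * b * G j x + ε * ∏ s ∈ univ.erase j, G s x) * Levi (G j) x v
        + (2 * b * ∑ j, ‖fderivPair (G j) x v‖ ^ 2
          + ε * ∑ j, ∑ k ∈ univ.erase j, (∏ s ∈ (univ.erase j).erase k, G s x)
              * inner ℝ (fderivPair (G j) x v) (fderivPair (G k) x v)) := by
  have hquad : ∀ j, Levi (fun y => a * G j y + b * G j y ^ 2) x v
      = (a + 2 * b * G j x) * Levi (G j) x v + 2 * b * ‖fderivPair (G j) x v‖ ^ 2 := by
    intro j
    rw [Levi_add (by fun_prop) (by fun_prop), Levi_const_mul _ (hG j),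
      Levi_const_mul _ ((hG j).pow 2), Levi_sq (hG j)]
    ring
  have hcoeff : ∑ j, (a + 2 * b * G j x + ε * ∏ s ∈ univ.erase j, G s x) * Levi (G j) x v
      = ∑ j, (a + 2 * b * G j x) * Levi (G j) x v
        + ε * ∑ j, (∏ s ∈ univ.erase j, G s x) * Levi (G j) x v := by
    rw [mul_sum, ← sum_add_distrib]
    exact sum_congr rfl fun j _ => by ring
  rw [Levi_add (ContDiffAt.sum fun j _ => by fun_prop) (by fun_prop),
    Levi_sum _ (fun j _ => by fun_prop), Levi_const_mul _ (contDiffAt_prod fun j _ => hG j),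
    Levi_prod _ (fun j _ => hG j), sum_congr rfl fun j _ => hquad j, hcoeff, sum_add_distrib,
    ← mul_sum]
  ring
end

theorem phi_levi_positive_general
    (n κ : ℕ)
    (U : Set (Fin n → ℂ)) (hU : IsOpen U)
    (G : Fin (κ + 1) → (Fin n → ℂ) → ℝ)
    (hGsmooth : ∀ j, ContDiffOn ℝ 2 (G j) U)
    (hGbound : ∀ j, ∀ x ∈ U, |G j x| ≤ 1)
    (hGlevi : ∀ j, ∀ x ∈ U, ∀ v : Fin n → ℂ, 0 ≤ Levi (G j) x v)
    (ε : ℝ) (hε : ε = 1 ∨ ε = -1) :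
    ∀ x ∈ U, ∀ v : Fin n → ℂ,
      (∑ j, ((κ : ℝ) + 1 + κ * G j x + ε * ∏ s ∈ univ.erase j, G s x) * Levi (G j) x v) ≤
        Levi (fun y => (∑ j, (((κ : ℝ) + 1) * G j y + (κ : ℝ) / 2 * (G j y) ^ 2)) +
          ε * ∏ j, G j y) x v ∧
      0 ≤ ∑ j, ((κ : ℝ) + 1 + κ * G j x + ε * ∏ s ∈ univ.erase j, G s x) * Levi (G j) x v ∧
      0 ≤ Levi (fun y => (∑ j, (((κ : ℝ) + 1) * G j y + (κ : ℝ) / 2 * (G j y) ^ 2)) +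
          ε * ∏ j, G j y) x v := by
  intro x hx v
  have hG : ∀ j, ContDiffAt ℝ 2 (G j) x := fun j => (hGsmooth j).contDiffAt (hU.mem_nhds hx)
  have hprod : ∀ t : Finset (Fin (κ + 1)), |∏ s ∈ t, G s x| ≤ 1 :=
    fun t => abs_prod_le_one t fun s _ => hGbound s x hx
  have habs_ε_mul : ∀ r : ℝ, |ε * r| = |r| := by
    rcases hε with rfl | rfl <;> simp
  have hcross := abs_sum_sum_erase_mul_inner_le (fun j => fderivPair (G j) x v)
    (fun j k => ∏ s ∈ (univ.erase j).erase k, G s x) fun j k => hprod _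
  rw [Fintype.card_fin, Nat.cast_add_one, add_sub_cancel_right, ← habs_ε_mul] at hcross
  have hcoeff : ∀ j, 0 ≤ (κ : ℝ) + 1 + κ * G j x + ε * ∏ s ∈ univ.erase j, G s x := by
    intro j
    have hGj := neg_le_of_abs_le (hGbound j x hx)
    have hεP := neg_le_of_abs_le ((habs_ε_mul _).trans_le (hprod (univ.erase j)))
    nlinarith [(Nat.cast_nonneg κ : (0 : ℝ) ≤ κ)]
  have hlower := sum_nonneg fun j (_ : j ∈ univ) => mul_nonneg (hcoeff j) (hGlevi j x hx v)
  have hupper :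
      (∑ j, ((κ : ℝ) + 1 + κ * G j x + ε * ∏ s ∈ univ.erase j, G s x) * Levi (G j) x v)
      ≤ Levi (fun y => (∑ j, (((κ : ℝ) + 1) * G j y + (κ : ℝ) / 2 * (G j y) ^ 2)) +
          ε * ∏ j, G j y) x v := by
    rw [Levi_sum_add_mul_prod hG, mul_div_cancel₀ _ two_ne_zero]
    linarith [neg_abs_le (ε * ∑ j, ∑ k ∈ univ.erase j,
      (∏ s ∈ (univ.erase j).erase k, G s x)
        * inner ℝ (fderivPair (G j) x v) (fderivPair (G k) x v))]
  exact ⟨hupper, hlower, hlower.trans hupper⟩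

/-- Lemma: positivity of the complex Hessian of the auxiliary functions
`Φ^± = Σ_j ((κ+1) G_j + (κ/2) G_j²) ± Π_j G_j`. If each `G_j` is `C²`, bounded by `1`, and
Levi-positive on the open set `U`, then for all `x ∈ U` and `v ∈ ℂⁿ`,
`Levi Φ^± x v ≥ Σ_j (κ + 1 + κ G_j(x) ± Π_{s ≠ j} G_s(x)) Levi G_j x v ≥ 0`;
in particular `Φ^±` is Levi-positive (hence p.s.h.) on `U`. -/
theorem phi_levi_positive
    (n κ : ℕ) (hn : 1 ≤ n) (hκ : 1 ≤ κ)
    (U : Set (Fin n → ℂ)) (hU : IsOpen U)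
    (G : Fin (κ + 1) → (Fin n → ℂ) → ℝ)
    (hGsmooth : ∀ j, ContDiffOn ℝ 2 (G j) U)
    (hGbound : ∀ j, ∀ x ∈ U, |G j x| ≤ 1)
    (hGlevi : ∀ j, ∀ x ∈ U, ∀ v : Fin n → ℂ, 0 ≤ Levi (G j) x v)
    (ε : ℝ) (hε : ε = 1 ∨ ε = -1) :
    ∀ x ∈ U, ∀ v : Fin n → ℂ,
      (∑ j, ((κ : ℝ) + 1 + κ * G j x + ε * ∏ s ∈ univ.erase j, G s x) * Levi (G j) x v) ≤
        Levi (fun y => (∑ j, (((κ : ℝ) + 1) * G j y + (κ : ℝ) / 2 * (G j y) ^ 2)) +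
          ε * ∏ j, G j y) x v ∧
      0 ≤ ∑ j, ((κ : ℝ) + 1 + κ * G j x + ε * ∏ s ∈ univ.erase j, G s x) * Levi (G j) x v ∧
      0 ≤ Levi (fun y => (∑ j, (((κ : ℝ) + 1) * G j y + (κ : ℝ) / 2 * (G j y) ^ 2)) +
          ε * ∏ j, G j y) x v :=
  phi_levi_positive_general n κ U hU G hGsmooth hGbound hGlevi ε hε
end
end
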